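/- arXiv:2205.07442 — 6 statements merged into one kernel-verified Lean document; each statement's English description precedes it below -/
import Mathlib

section
/- Let A and B be groups. Let σ denote the shift action of B on the full direct product A^B, given by (σ_b(x))_c = x_{b⁻¹c}. Let ρ : B → A^B be a map with ρ_e = e and such that v_{b,c} := ρ_b · σ_b(ρ_c) · ρ_{bc}⁻¹ lies in the restricted direct product A^{(B)} = ⊕_{b∈B} A for all b, c ∈ B. Define α_b := Ad(ρ_b) ∘ σ_b, an automorphism of A^B. Then each α_b restricts to an automorphism of A^{(B)}, and (α, v) defines a cocycle action of B on A^{(B)}. -/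
/-- The shift automorphism `σ_b` of the full direct product `A^B`, `(σ_b x)_c = x_{b⁻¹ c}`. -/
def shiftAut {A : Type*} (B : Type*) [Group A] [Group B] (b : B) : MulAut (B → A) where
  toFun x := fun c => x (b⁻¹ * c)
  invFun x := fun c => x (b * c)
  left_inv x := by funext c; simp
  right_inv x := by funext c; simp
  map_mul' x y := rfl

/-- The restricted direct product `A^{(B)} = ⊕_{b ∈ B} A` of finitely supported functions,
as a subgroup of the full direct product `A^B`. -/
def Restricted (A B : Type*) [Group A] : Subgroup (B → A) where
  carrier := {f | (Function.mulSupport f).Finite}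
  one_mem' := by simp [Function.mulSupport]
  mul_mem' := fun hf hg => Set.Finite.subset (hf.union hg) (Function.mulSupport_mul _ _)
  inv_mem' := fun hf => by simpa [Function.mulSupport_inv] using hf

/-- The automorphism-level map `α_b = Ad(ρ_b) ∘ σ_b` of `A^B`, as a function. -/
def adShift {A B : Type*} [Group A] [Group B] (ρ : B → (B → A)) (b : B) (x : B → A) :
    B → A :=
  ρ b * shiftAut B b x * (ρ b)⁻¹

/-- The 2-cocycle `v_{b,c} = ρ_b σ_b(ρ_c) ρ_{bc}⁻¹`. -/
def vShift {A B : Type*} [Group A] [Group B] (ρ : B → (B → A)) (b c : B) : B → A :=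
  ρ b * shiftAut B b (ρ c) * (ρ (b * c))⁻¹

lemma shift_shift {A B : Type*} [Group A] [Group B] (b c : B) (x : B → A) :
    shiftAut B b (shiftAut B c x) = shiftAut B (b * c) x := by
  funext a; simp [shiftAut, mul_inv_rev, mul_assoc]

lemma shift_one {A B : Type*} [Group A] [Group B] (x : B → A) :
    shiftAut B (1 : B) x = x := by
  funext a; simp [shiftAut]

/-- If `ρ : B → A^B` satisfies `ρ_e = e` and `v_{b,c} = ρ_b σ_b(ρ_c) ρ_{bc}⁻¹ ∈ A^{(B)}`,
then the automorphisms `α_b = Ad(ρ_b) ∘ σ_b` of `A^B` restrict to automorphisms of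
`A^{(B)}` and `(α, v)` is a cocycle action of `B` on `A^{(B)}`. -/
theorem adShift_vShift_cocycle_action {A B : Type*} [Group A] [Group B]
    (ρ : B → (B → A)) (hρe : ρ 1 = 1)
    (hv : ∀ b c, vShift ρ b c ∈ Restricted A B) :
    (∀ b, ∀ f ∈ Restricted A B, adShift ρ b f ∈ Restricted A B) ∧
    (∀ b, Function.Bijective (adShift ρ b)) ∧
    (∀ b (x y : B → A), adShift ρ b (x * y) = adShift ρ b x * adShift ρ b y) ∧
    (∀ b c (x : B → A),
        adShift ρ b (adShift ρ c x)
          = vShift ρ b c * adShift ρ (b * c) x * (vShift ρ b c)⁻¹) ∧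
    (∀ b c d, vShift ρ b c * vShift ρ (b * c) d
        = adShift ρ b (vShift ρ c d) * vShift ρ b (c * d)) ∧
    (∀ b, vShift ρ b 1 = 1) ∧ (∀ b, vShift ρ 1 b = 1) := by
  refine ⟨?_, ?_, ?_, ?_, ?_, ?_, ?_⟩
  · intro b f hf
    have h1 : Function.mulSupport (adShift ρ b f)
        ⊆ (fun c => b⁻¹ * c) ⁻¹' Function.mulSupport f := by
      intro c hc
      simp only [Function.mem_mulSupport, Set.mem_preimage] at *
      intro h
      apply hc
      show ρ b c * f (b⁻¹ * c) * (ρ b c)⁻¹ = 1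
      simp [h]
    exact Set.Finite.subset (hf.preimage ((mul_right_injective b⁻¹).injOn)) h1
  · intro b
    have : adShift ρ b = ⇑((shiftAut B b).trans (MulAut.conj (ρ b))) := rfl
    rw [this]
    exact ((shiftAut B b).trans (MulAut.conj (ρ b))).bijective
  · intro b x y
    simp only [adShift, map_mul]
    group
  · intro b c x
    simp only [adShift, vShift, map_mul, map_inv, shift_shift]
    group
  · intro b c d
    simp only [adShift, vShift, map_mul, map_inv, shift_shift]
    group
  · intro b
    simp [vShift, hρe]
  · intro b
    simp [vShift, hρe, shift_one]
end

section
/- Let G be a wreath-like product of groups A and B, given by a short exact sequence {e} → ⊕_{b∈B} A_b → G →^ε B → {e} with A_b ≅ A and g A_b g⁻¹ = A_{ε(g)b} for all g ∈ G, b ∈ B. Fix a section k : B → G of ε with k_e = e, and for each b ∈ B let φ_b : A_e → A_b be the isomorphism φ_b(x) = k_b x k_b⁻¹. Define τ : G → A_e^B by (τ_g)_b = π(k_b⁻¹ g k_{ε(g)⁻¹ b}), where π : ⊕_{c∈B} A_c → A_e is the coordinate projection. Then τ is a 1-cocycle for the shift action composed with ε: τ_{g₁} · σ_{ε(g₁)}(τ_{g₂})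 = τ_{g₁ g₂} for all g₁, g₂ ∈ G. -/
/-- The restricted product group `A^{(B)}`. -/
abbrev RP (A B : Type*) [Group A] := ↥(Restricted A B)

/-- The coordinate subgroup `A_c ≤ A^{(B)}` of functions supported at `{c}`. -/
def coordSub (A : Type*) {B : Type*} [Group A] (c : B) : Subgroup (RP A B) where
  carrier := {f | ∀ d, d ≠ c → (f : B → A) d = 1}
  one_mem' := fun _ _ => rfl
  mul_mem' := by
    intro f g hf hg d hd
    have : ((f * g : RP A B) : B → A) d = (f : B → A) d * (g : B → A) d := rfl
    rw [this, hf d hd, hg d hd, one_mul]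
  inv_mem' := by
    intro f hf d hd
    have : ((f⁻¹ : RP A B) : B → A) d = ((f : B → A) d)⁻¹ := rfl
    rw [this, hf d hd, inv_one]

/-- `G` is a wreath-like product of `A` and `B` (`G ∈ WR(A,B)`): there is a short exact
sequence `{e} → ⊕_{b ∈ B} A_b → G →^ε B → {e}`, where the kernel of `ε` is a copy (under
`Φ`) of the restricted product `A^{(B)}`, with coordinate subgroups `A_b = Φ(A_b)`, and
conjugation satisfies `g A_b g⁻¹ = A_{ε(g) b}`. -/
structure IsWreathLike (A B : Type*) [Group A] [Group B] (G : Type*) [Group G] where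
  /-- the quotient homomorphism onto `B` -/
  eps : G →* B
  surj : Function.Surjective eps
  /-- the identification of `ker ε` with `A^{(B)} = ⊕_{b ∈ B} A_b` -/
  Phi : RP A B →* G
  inj : Function.Injective Phi
  range_eq_ker : Phi.range = eps.ker
  conj_coord : ∀ (g : G) (b : B),
    ((coordSub A b).map Phi).map (MulAut.conj g).toMonoidHom
      = (coordSub A (eps g * b)).map Phi

/-- Let `G ∈ WR(A,B)` with quotient `ε`, let `k` be a section of `ε` with `k_e = e`, and
define `τ : G → A^B` by `(τ_g)_b = π(k_b⁻¹ g k_{ε(g)⁻¹ b})`, where `π` is the projection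
of `ker ε ≅ ⊕_{c} A_c` onto the coordinate `A_e ≅ A`. Then `τ` is a 1-cocycle for the
shift action composed with `ε`: `τ_{g₁} · σ_{ε(g₁)}(τ_{g₂}) = τ_{g₁ g₂}`. -/
theorem wreath_like_section_cocycle {A B G : Type*} [Group A] [Group B] [Group G]
    (W : IsWreathLike A B G)
    (k : B → G) (hk : ∀ b, W.eps (k b) = b) (hke : k 1 = 1)
    (T : G → B → A)
    (hT : ∀ (g : G) (b : B) (f : RP A B),
      W.Phi f = (k b)⁻¹ * g * k ((W.eps g)⁻¹ * b) → T g b = (f : B → A) 1) :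
    ∀ g₁ g₂ : G,
      (T g₁ * shiftAut B (W.eps g₁) (T g₂) : B → A) = T (g₁ * g₂) := by
  intro g₁ g₂
  funext b
  have mem : ∀ (g : G) (b : B), ∃ f : RP A B,
      W.Phi f = (k b)⁻¹ * g * k ((W.eps g)⁻¹ * b) := by
    intro g b
    have : (k b)⁻¹ * g * k ((W.eps g)⁻¹ * b) ∈ W.Phi.range := by
      rw [W.range_eq_ker, MonoidHom.mem_ker]
      simp [hk, mul_assoc]
    exact this
  obtain ⟨f₁, hf₁⟩ := mem g₁ b
  obtain ⟨f₂, hf₂⟩ := mem g₂ ((W.eps g₁)⁻¹ * b)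
  have h1 := hT g₁ b f₁ hf₁
  have h2 := hT g₂ ((W.eps g₁)⁻¹ * b) f₂ hf₂
  have hf : W.Phi (f₁ * f₂) = (k b)⁻¹ * (g₁ * g₂) * k ((W.eps (g₁ * g₂))⁻¹ * b) := by
    rw [map_mul, hf₁, hf₂, map_mul, mul_inv_rev]
    group
  have h3 := hT (g₁ * g₂) b (f₁ * f₂) hf
  show T g₁ b * T g₂ ((W.eps g₁)⁻¹ * b) = T (g₁ * g₂) b
  rw [h1, h2, h3]
  rfl
end

section
/- Let G ∈ WR(A, B) be a wreath-like product of groups A and B. Then there exists a map ρ : B → A^B with ρ_e = e such that v_{b,c} := ρ_b σ_b(ρ_c) ρ_{bc}⁻¹ ∈ A^{(B)} for all b, c ∈ B, and such that, setting α_b := Ad(ρ_b) ∘ σ_b ∈ Aut(A^{(B)}), the group G is isomorphic to the cocycle semidirect product A^{(B)} ⋊_{α,v} B. -/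
/-- The multiplication of the cocycle semidirect product `A^{(B)} ⋊_{α,v} B` for
`α_b = Ad(ρ_b) ∘ σ_b` and `v_{b,c} = ρ_b σ_b(ρ_c) ρ_{bc}⁻¹`, on the ambient set `A^B × B`. -/
def cocycleMulShift {A B : Type*} [Group A] [Group B] (ρ : B → (B → A))
    (x y : (B → A) × B) : (B → A) × B :=
  (x.1 * adShift ρ x.2 y.1 * vShift ρ x.2 y.2, x.2 * y.2)

/-!
Choose a section `s` of `ε` with `s 1 = 1`. Conjugation by `s c` carries the coordinate subgroup
`A_1` onto `A_c`; twisting `Φ` coordinatewise by these isomorphisms gives an embedding `Ψ` of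
`A^{(B)}` onto `ker ε` with `Ψ(δ_c a) = s_c Ψ(δ_1 a) s_c⁻¹`. The defect
`u_{b,c} = Ψ⁻¹(s_b s_c s_{bc}⁻¹)` of `s` lies in `A^{(B)}`, and conjugation by `s_b` acts on
`Ψ(A^{(B)})` as `Ad(ρ_b) ∘ σ_b` with `ρ_b(d) = u_{b,b⁻¹d}(d)`, since both sides are homomorphisms
that agree on the generators `δ_c a`. Read coordinatewise, the cocycle identity of `u` says
`v_{b,c} = u_{b,c}`, and `(x, b) ↦ Ψ(x) s_b` is the required isomorphism.
-/

theorem MonoidHom.exists_rightInverse_map_one {G B : Type*} [Group G] [Group B] (f : G →* B)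
    (hf : Function.Surjective f) : ∃ s : B → G, Function.RightInverse s f ∧ s 1 = 1 := by
  classical
  refine ⟨Function.update (Function.surjInv hf) 1 1, fun b => ?_, Function.update_self ..⟩
  by_cases hb : b = 1
  · simp [hb]
  · simp [hb, Function.surjInv_eq hf]

@[simp]
theorem shiftAut_apply {A B : Type*} [Group A] [Group B] (b : B) (x : B → A) (c : B) :
    shiftAut B b x c = x (b⁻¹ * c) := rfl

theorem mulSupport_adShift {A B : Type*} [Group A] [Group B] (ρ : B → B → A) (b : B)
    (x : B → A) : Function.mulSupport (adShift ρ b x) = (b⁻¹ * ·) ⁻¹' Function.mulSupport x := by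
  ext d; simp [adShift]

namespace Restricted

variable {A B : Type*} [Group A]

theorem mulSupport_piCongrRight (f : B → A ≃* A) (x : B → A) :
    Function.mulSupport (MulEquiv.piCongrRight f x) = Function.mulSupport x := by
  ext d; simp

theorem map_piCongrRight (f : B → A ≃* A) :
    (Restricted A B).map (MulEquiv.piCongrRight f : (B → A) →* (B → A)) = Restricted A B := by
  ext x
  change x ∈ (Restricted A B).map (MulEquiv.piCongrRight f).toMonoidHom ↔ _
  rw [Subgroup.mem_map_equiv]
  show (Function.mulSupport _).Finite ↔ (Function.mulSupport x).Finite
  rw [MulEquiv.piCongrRight_symm, mulSupport_piCongrRight]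

noncomputable def piCongr (f : B → A ≃* A) : RP A B ≃* RP A B :=
  ((MulEquiv.piCongrRight f).subgroupMap (Restricted A B)).trans
    (MulEquiv.subgroupCongr (map_piCongrRight f))

@[simp]
theorem coe_piCongr (f : B → A ≃* A) (x : RP A B) (d : B) :
    (piCongr f x : B → A) d = f d (x.1 d) := rfl

def adShiftHom [Group B] (ρ : B → B → A) (b : B) : RP A B →* RP A B :=
  ((MulAut.conj (ρ b) * shiftAut B b).toMonoidHom.comp (Restricted A B).subtype).codRestrict
    (Restricted A B) fun x => by
      show (Function.mulSupport (adShift ρ b x)).Finite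
      rw [mulSupport_adShift]
      exact Set.Finite.preimage (mul_right_injective b⁻¹).injOn x.2

@[simp]
theorem coe_adShiftHom [Group B] (ρ : B → B → A) (b : B) (x : RP A B) :
    (adShiftHom ρ b x : B → A) = adShift ρ b x := rfl

section Single

variable [DecidableEq B]

theorem mulSingle_mem (c : B) (a : A) : Pi.mulSingle c a ∈ Restricted A B :=
  (Set.finite_singleton c).subset Pi.mulSupport_mulSingle_subset

def single (c : B) : A →* RP A B :=
  (MonoidHom.mulSingle (fun _ => A) c).codRestrict (Restricted A B) (mulSingle_mem c)

@[simp]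
theorem coe_single (c : B) (a : A) : (single c a : B → A) = Pi.mulSingle c a := rfl

theorem single_injective (c : B) : Function.Injective (single (A := A) c) := fun _ _ h =>
  Pi.mulSingle_injective c (congrArg Subtype.val h)

theorem coordSub_eq_range (c : B) : coordSub A c = (single c).range := by
  ext x
  refine ⟨fun hx => ⟨x.1 c, Subtype.ext (funext fun d => ?_)⟩, ?_⟩
  · by_cases hd : d = c
    · subst hd; simp
    · simp [hd, hx d hd]
  · rintro ⟨a, rfl⟩ d hd
    simp [hd]

noncomputable def coordSubEquiv (c : B) : A ≃* coordSub A c :=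
  (MonoidHom.ofInjective (single_injective c)).trans
    (MulEquiv.subgroupCongr (coordSub_eq_range c).symm)

@[simp]
theorem single_coordSubEquiv_symm (c : B) (x : coordSub A c) :
    single c ((coordSubEquiv c).symm x) = x := by
  simp [coordSubEquiv]

theorem conj_single (x : RP A B) (c : B) (a : A) :
    x * single c a * x⁻¹ = single c (x.1 c * a * (x.1 c)⁻¹) := by
  ext d
  by_cases hd : d = c
  · subst hd; simp
  · simp [hd]

theorem hom_ext {H : Type*} [Group H] {φ ψ : RP A B →* H}
    (h : ∀ c a, φ (single c a) = ψ (single c a)) : φ = ψ := by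
  ext x
  obtain ⟨S, hS⟩ : ∃ S : Finset B, Function.mulSupport x.1 ⊆ S :=
    ⟨Set.Finite.toFinset x.2, (Set.Finite.coe_toFinset x.2).superset⟩
  induction S using Finset.induction_on generalizing x with
  | empty =>
    obtain rfl : x = 1 := Subtype.ext (funext fun d => by
      simpa using Function.notMem_mulSupport.mp fun hd => by simpa using hS hd)
    simp
  | insert c S _ ih =>
    have hrest : Function.mulSupport ((single c (x.1 c))⁻¹ * x).1 ⊆ S := by
      intro d hd
      by_cases hdc : d = c
      · subst hdc; simp at hd
      · have hdS := hS (by simpa [hdc] using hd)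
        simpa [hdc] using hdS
    calc φ x = φ (single c (x.1 c)) * φ ((single c (x.1 c))⁻¹ * x) := by
          rw [← map_mul, mul_inv_cancel_left]
      _ = ψ (single c (x.1 c)) * ψ ((single c (x.1 c))⁻¹ * x) := by rw [h, ih _ hrest]
      _ = ψ x := by rw [← map_mul, mul_inv_cancel_left]

theorem piCongr_single (f : B → A ≃* A) (c : B) (a : A) :
    piCongr f (single c a) = single c (f c a) := by
  ext d
  simp [Pi.apply_mulSingle (fun d => f d) (fun d => map_one (f d))]

theorem adShiftHom_single [Group B] (ρ : B → B → A) (b c : B) (a : A) :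
    adShiftHom ρ b (single c a) = single (b * c) (ρ b (b * c) * a * (ρ b (b * c))⁻¹) := by
  ext d
  by_cases hd : d = b * c
  · subst hd; simp [adShift]
  · have : b⁻¹ * d ≠ c := by rwa [Ne, inv_mul_eq_iff_eq_mul]
    simp [adShift, hd, this]

end Single

end Restricted

namespace IsWreathLike

variable {A B G : Type*} [Group A] [Group B] [Group G] [DecidableEq B]

open Restricted

noncomputable def coordConj (W : IsWreathLike A B G) (g : G) (c : B) : A ≃* A :=
  (coordSubEquiv c).trans <|
  ((coordSub A c).equivMapOfInjective W.Phi W.inj).trans <|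
  (Subgroup.equivMapOfInjective _ _ (MulAut.conj g).injective).trans <|
  (MulEquiv.subgroupCongr (W.conj_coord g c)).trans <|
  ((coordSub A (W.eps g * c)).equivMapOfInjective W.Phi W.inj).symm.trans
    (coordSubEquiv (W.eps g * c)).symm

theorem conj_phi_single (W : IsWreathLike A B G) (g : G) (c : B) (a : A) :
    g * W.Phi (single c a) * g⁻¹ = W.Phi (single (W.eps g * c) (W.coordConj g c a)) := by
  simp only [coordConj, MulEquiv.trans_apply, single_coordSubEquiv_symm]
  rw [← Subgroup.coe_equivMapOfInjective_apply _ _ W.inj, MulEquiv.apply_symm_apply]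
  rfl

theorem exists_normalized_embedding (W : IsWreathLike A B G) {s : B → G}
    (hs : Function.RightInverse s W.eps) (hs1 : s 1 = 1) :
    ∃ Ψ : RP A B →* G, Function.Injective Ψ ∧ Ψ.range = W.eps.ker ∧
      ∀ c a, Ψ (single c a) = s c * Ψ (single 1 a) * (s c)⁻¹ := by
  set e := piCongr fun c => W.coordConj (s c) 1
  have hΦe : ∀ c a, W.Phi (e (single c a)) = s c * W.Phi (single 1 a) * (s c)⁻¹ := by
    intro c a
    simpa [e, piCongr_single, hs c] using (W.conj_phi_single (s c) 1 a).symm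
  refine ⟨W.Phi.comp e.toMonoidHom, W.inj.comp e.injective, ?_, fun c a => ?_⟩
  · rw [MonoidHom.range_comp, MonoidHom.range_eq_top_of_surjective _ e.surjective,
      ← MonoidHom.range_eq_map, W.range_eq_ker]
  · simp only [MonoidHom.comp_apply, MulEquiv.coe_toMonoidHom, hΦe, hs1]
    group

end IsWreathLike

section SectionCocycle

variable {A B G : Type*} [Group A] [Group B] [Group G]

open Restricted

noncomputable def sectionCocycle (Ψ : RP A B →* G) (s : B → G) (b c : B) : RP A B :=
  Function.invFun Ψ (s b * s c * (s (b * c))⁻¹)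

noncomputable def sectionRho (Ψ : RP A B →* G) (s : B → G) (b : B) : B → A :=
  fun d => (sectionCocycle Ψ s b (b⁻¹ * d) : B → A) d

variable {ε : G →* B} {s : B → G} {Ψ : RP A B →* G}

theorem sectionRho_mul_apply (b c : B) :
    sectionRho Ψ s b (b * c) = (sectionCocycle Ψ s b c : B → A) (b * c) := by
  rw [sectionRho, inv_mul_cancel_left]

theorem apply_sectionCocycle (hrange : Ψ.range = ε.ker) (hs : Function.RightInverse s ε)
    (b c : B) : Ψ (sectionCocycle Ψ s b c) = s b * s c * (s (b * c))⁻¹ :=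
  Function.invFun_eq <| by
    rw [← MonoidHom.mem_range, hrange, MonoidHom.mem_ker]
    simp [hs _]

theorem sectionCocycle_one_left (hinj : Function.Injective Ψ) (hs1 : s 1 = 1) (c : B) :
    sectionCocycle Ψ s 1 c = 1 := by
  rw [sectionCocycle, hs1, one_mul, one_mul, mul_inv_cancel, ← map_one Ψ]
  exact Function.leftInverse_invFun hinj 1

theorem sectionRho_one (hinj : Function.Injective Ψ) (hs1 : s 1 = 1) : sectionRho Ψ s 1 = 1 := by
  funext d
  simp [sectionRho, sectionCocycle_one_left hinj hs1]

variable [DecidableEq B]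

theorem conj_section_apply (hrange : Ψ.range = ε.ker) (hs : Function.RightInverse s ε)
    (hΨs : ∀ c a, Ψ (single c a) = s c * Ψ (single 1 a) * (s c)⁻¹) (b : B) (x : RP A B) :
    s b * Ψ x * (s b)⁻¹ = Ψ (adShiftHom (sectionRho Ψ s) b x) := by
  suffices (MulAut.conj (s b)).toMonoidHom.comp Ψ = Ψ.comp (adShiftHom (sectionRho Ψ s) b) from
    DFunLike.congr_fun this x
  refine hom_ext fun c a => ?_
  show s b * Ψ (single c a) * (s b)⁻¹ = Ψ (adShiftHom (sectionRho Ψ s) b (single c a))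
  rw [adShiftHom_single, sectionRho_mul_apply, ← conj_single, map_mul, map_mul, map_inv,
    apply_sectionCocycle hrange hs, hΨs c, hΨs (b * c)]
  group

theorem sectionCocycle_mul (hinj : Function.Injective Ψ) (hrange : Ψ.range = ε.ker)
    (hs : Function.RightInverse s ε)
    (hΨs : ∀ c a, Ψ (single c a) = s c * Ψ (single 1 a) * (s c)⁻¹) (b c e : B) :
    sectionCocycle Ψ s b c * sectionCocycle Ψ s (b * c) e
      = adShiftHom (sectionRho Ψ s) b (sectionCocycle Ψ s c e) * sectionCocycle Ψ s b (c * e) := by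
  apply hinj
  simp only [map_mul, ← conj_section_apply hrange hs hΨs, apply_sectionCocycle hrange hs,
    mul_assoc b c e]
  group

theorem vShift_sectionRho (hinj : Function.Injective Ψ) (hrange : Ψ.range = ε.ker)
    (hs : Function.RightInverse s ε)
    (hΨs : ∀ c a, Ψ (single c a) = s c * Ψ (single 1 a) * (s c)⁻¹) (b c : B) :
    vShift (sectionRho Ψ s) b c = sectionCocycle Ψ s b c := by
  funext d
  have h := congrArg (fun x : RP A B => (x : B → A) d)
    (sectionCocycle_mul hinj hrange hs hΨs b c ((b * c)⁻¹ * d))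
  have h₁ : c⁻¹ * (b⁻¹ * d) = (b * c)⁻¹ * d := by group
  have h₂ : c * ((b * c)⁻¹ * d) = b⁻¹ * d := by group
  simp only [Subgroup.coe_mul, Pi.mul_apply, Pi.inv_apply, coe_adShiftHom, adShift,
    shiftAut_apply, sectionRho, h₂, inv_mul_cancel_right] at h
  simp only [vShift, sectionRho, shiftAut_apply, Pi.mul_apply, Pi.inv_apply, h₁]
  rw [← h, mul_inv_cancel_right]

end SectionCocycle

section Realization

variable {A B G : Type*} [Group A] [Group B] [Group G] {ε : G →* B} {s : B → G}
  {Ψ : RP A B →* G}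

open Restricted

theorem mul_section_injective (hinj : Function.Injective Ψ) (hrange : Ψ.range = ε.ker)
    (hs : Function.RightInverse s ε) :
    Function.Injective fun p : RP A B × B => Ψ p.1 * s p.2 := by
  rintro ⟨x, b⟩ ⟨y, c⟩ h
  have hker : ∀ z, ε (Ψ z) = 1 := fun z => by
    rw [← MonoidHom.mem_ker, ← hrange]; exact ⟨z, rfl⟩
  obtain rfl : b = c := by simpa [hker, hs _] using congrArg ε h
  exact Prod.ext (hinj (mul_right_cancel h)) rfl

theorem mul_section_surjective (hrange : Ψ.range = ε.ker) (hs : Function.RightInverse s ε) :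
    Function.Surjective fun p : RP A B × B => Ψ p.1 * s p.2 := by
  intro g
  obtain ⟨x, hx⟩ : g * (s (ε g))⁻¹ ∈ Ψ.range := by
    rw [hrange, MonoidHom.mem_ker, map_mul, map_inv, hs _, mul_inv_cancel]
  exact ⟨(x, ε g), by simp [hx]⟩

theorem cocycleMulShift_sectionRho [DecidableEq B] (hinj : Function.Injective Ψ)
    (hrange : Ψ.range = ε.ker) (hs : Function.RightInverse s ε)
    (hΨs : ∀ c a, Ψ (single c a) = s c * Ψ (single 1 a) * (s c)⁻¹) (x y : RP A B) (b c : B) :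
    cocycleMulShift (sectionRho Ψ s) ((x : B → A), b) ((y : B → A), c)
      = (((x * adShiftHom (sectionRho Ψ s) b y * sectionCocycle Ψ s b c : RP A B) : B → A),
          b * c) := by
  simp [cocycleMulShift, vShift_sectionRho hinj hrange hs hΨs]

theorem mul_section_mul [DecidableEq B] (hrange : Ψ.range = ε.ker) (hs : Function.RightInverse s ε)
    (hΨs : ∀ c a, Ψ (single c a) = s c * Ψ (single 1 a) * (s c)⁻¹) (x y : RP A B) (b c : B) :
    Ψ (x * adShiftHom (sectionRho Ψ s) b y * sectionCocycle Ψ s b c) * s (b * c)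
      = Ψ x * s b * (Ψ y * s c) := by
  rw [map_mul, map_mul, ← conj_section_apply hrange hs hΨs, apply_sectionCocycle hrange hs]
  group

end Realization

/-- Every wreath-like product `G ∈ WR(A,B)` admits a decomposition as a cocycle semidirect
product: there is `ρ : B → A^B` with `ρ_e = e` and `v_{b,c} := ρ_b σ_b(ρ_c) ρ_{bc}⁻¹ ∈ A^{(B)}`
such that, with `α_b := Ad(ρ_b) ∘ σ_b`, we have `G ≅ A^{(B)} ⋊_{α,v} B`. -/
theorem wreath_like_is_cocycle_semidirect_product {A B G : Type*} [Group A] [Group B]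
    [Group G] (W : IsWreathLike A B G) :
    ∃ ρ : B → (B → A), ρ 1 = 1 ∧
      (∀ b c, vShift ρ b c ∈ Restricted A B) ∧
      ∃ θ : (B → A) × B → G,
        (∀ x y : (B → A) × B, x.1 ∈ Restricted A B → y.1 ∈ Restricted A B →
          θ (cocycleMulShift ρ x y) = θ x * θ y) ∧
        Set.InjOn θ {p : (B → A) × B | p.1 ∈ Restricted A B} ∧
        (∀ g : G, ∃ p : (B → A) × B, p.1 ∈ Restricted A B ∧ θ p = g) := by
  classical
  obtain ⟨s, hs, hs1⟩ := W.eps.exists_rightInverse_map_one W.surj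
  obtain ⟨Ψ, hinj, hrange, hΨs⟩ := W.exists_normalized_embedding hs hs1
  have hθ : ∀ (x : RP A B) b, Function.extend Subtype.val Ψ 1 (x : B → A) * s b = Ψ x * s b :=
    fun x b => by rw [Subtype.val_injective.extend_apply]
  refine ⟨sectionRho Ψ s, sectionRho_one hinj hs1, fun b c =>
    vShift_sectionRho hinj hrange hs hΨs b c ▸ (sectionCocycle Ψ s b c).2,
    fun p => Function.extend Subtype.val Ψ 1 p.1 * s p.2, ?_, ?_, ?_⟩
  · rintro ⟨x, b⟩ ⟨y, c⟩ hx hy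
    lift x to RP A B using hx
    lift y to RP A B using hy
    simp only [cocycleMulShift_sectionRho hinj hrange hs hΨs, hθ]
    exact mul_section_mul hrange hs hΨs x y b c
  · rintro ⟨x, b⟩ hx ⟨y, c⟩ hy h
    lift x to RP A B using hx
    lift y to RP A B using hy
    have hxy : (x, b) = (y, c) := mul_section_injective hinj hrange hs (by simpa only [hθ] using h)
    cases hxy
    rfl
  · intro g
    obtain ⟨⟨x, b⟩, rfl⟩ := mul_section_surjective hrange hs g
    exact ⟨(x, b), x.2, hθ x b⟩
end

section
/- Every group G ∈ WR(A, B) is isomorphic to a subgroup H of the unrestricted wreath product A^B ⋊_σ B satisfying A^{(B)} ⊆ H, δ(H) = B, and ker(δ|_H) = A^{(B)}, where δ : A^B ⋊_σ B → B is the quotient map. Explicitly, if G = A^{(B)} ⋊_{α,v} B with α_b = Ad(ρ_b) σ_b and v_{b,c} = ρ_b σ_b(ρ_c) ρ_{bc}⁻¹ for a map ρ : B → A^B with ρ_e = e, then λ : G → A^B ⋊_σ B given by λ(a, b) = (a ρ_b, b) is an injective group homomorphism with image containing A^{(B)}. -/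
/-- The shift action of `B` on `A^B` as a homomorphism `B →* Aut(A^B)`. -/
def shiftHom (A B : Type*) [Group A] [Group B] : B →* MulAut (B → A) where
  toFun := shiftAut B
  map_one' := by
    ext x c
    simp [shiftAut]
  map_mul' b c := by
    ext x d
    simp [shiftAut, MulAut.mul_def, mul_assoc]

/-- The map `λ(a,b) = (a ρ_b, b)` from `A^{(B)} ⋊_{α,v} B` to `A^B ⋊_σ B`. -/
def lamMap {A B : Type*} [Group A] [Group B] (ρ : B → (B → A)) (p : (B → A) × B) :
    (B → A) ⋊[shiftHom A B] B :=
  ⟨p.1 * ρ p.2, p.2⟩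

/-- Every `G ∈ WR(A,B)`, written as `G = A^{(B)} ⋊_{α,v} B` with `α_b = Ad(ρ_b) σ_b` and
`v_{b,c} = ρ_b σ_b(ρ_c) ρ_{bc}⁻¹`, is isomorphic via `λ(a,b) = (a ρ_b, b)` to a subgroup
`H` of the unrestricted wreath product `A^B ⋊_σ B` with `A^{(B)} ⊆ H`, `δ(H) = B` and
`ker(δ|_H) = A^{(B)}`. -/
theorem wreath_like_embeds_in_full_wreath {A B : Type*} [Group A] [Group B]
    (ρ : B → (B → A)) (hρe : ρ 1 = 1)
    (hv : ∀ b c, vShift ρ b c ∈ Restricted A B) :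
    (∀ x y : (B → A) × B, x.1 ∈ Restricted A B → y.1 ∈ Restricted A B →
        lamMap ρ (cocycleMulShift ρ x y) = lamMap ρ x * lamMap ρ y) ∧
    Set.InjOn (lamMap ρ) {p : (B → A) × B | p.1 ∈ Restricted A B} ∧
    (∀ f ∈ Restricted A B, ∃ p : (B → A) × B, p.1 ∈ Restricted A B ∧
        lamMap ρ p = SemidirectProduct.inl f) ∧
    (∀ b : B, ∃ p : (B → A) × B, p.1 ∈ Restricted A B ∧
        SemidirectProduct.rightHom (lamMap ρ p) = b) ∧
    (∀ p : (B → A) × B, p.1 ∈ Restricted A B →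
        (SemidirectProduct.rightHom (lamMap ρ p) = 1 ↔
          ∃ f ∈ Restricted A B, lamMap ρ p = SemidirectProduct.inl f)) := by
  refine ⟨?_, ?_, ?_, ?_, ?_⟩
  · intro x y _ _
    simp only [lamMap, cocycleMulShift, adShift, vShift]
    ext1
    · show _ = x.1 * ρ x.2 * shiftHom A B x.2 (y.1 * ρ y.2)
      simp only [shiftHom, MonoidHom.coe_mk, OneHom.coe_mk, map_mul]
      group
    · rfl
  · intro p _ q _ h
    have h1 : p.1 * ρ p.2 = q.1 * ρ q.2 := congrArg SemidirectProduct.left h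
    have h2 : p.2 = q.2 := congrArg SemidirectProduct.right h
    have : p.1 = q.1 := by
      rw [h2] at h1; exact mul_right_cancel h1
    exact Prod.ext this h2
  · intro f hf
    refine ⟨(f, 1), hf, ?_⟩
    simp [lamMap, hρe]
  · intro b
    exact ⟨(1, b), one_mem _, rfl⟩
  · intro p hp
    constructor
    · intro h
      have hb : p.2 = 1 := h
      refine ⟨p.1, hp, ?_⟩
      simp [lamMap, hb, hρe]
    · rintro ⟨f, hf, h⟩
      have := congrArg SemidirectProduct.right h
      simpa [lamMap] using this
end

section
/- Let R be a countable measure-preserving equivalence relation on a standard probability space (X, μ) and let (γ, ω) be a cocycle action of a countable group B on R such that for every b ∈ B \ {e}, the set {x ∈ X : γ_b(x) ∈ [x]_R} has measure zero. Let S be the smallest equivalence relation on X containing R and the graph of γ_b for every b ∈ B. Then for almost every x ∈ X, the S-class of x decomposes as a disjoint union: [x]_S = ⊔_{g ∈ B} [γ_g(x)]_R. -/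
open MeasureTheory

/-- Let `R` be a countable measure-preserving equivalence relation on a standard probability
space `(X,μ)` and `(γ,ω)` a cocycle action of a countable group `B` on `R` which is free in
the sense that `μ{x : γ_b(x) ∈ [x]_R} = 0` for `b ≠ e`. Let `S` be the smallest equivalence
relation containing `R` and the graphs of all `γ_b`. Then for a.e. `x`, the `S`-class of `x`
is the disjoint union `[x]_S = ⊔_{g ∈ B} [γ_g(x)]_R`. -/
theorem class_decomposition_of_cocycle_extension
    {X : Type*} [MeasurableSpace X] [StandardBorelSpace X]
    (μ : Measure X) [IsProbabilityMeasure μ]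
    {B : Type*} [Group B] [Countable B]
    (R : X → X → Prop) (hR : Equivalence R)
    (hcount : ∀ x : X, {y | R x y}.Countable)
    (γ : B → (X ≃ X))
    (hγmp : ∀ b, MeasurePreserving (γ b) μ μ)
    (hγR : ∀ b x y, R x y ↔ R (γ b x) (γ b y))
    (ω : B → B → (X ≃ X))
    (hω : ∀ b c x, R (ω b c x) x)
    (hcoc : ∀ b c x, γ b (γ c x) = ω b c (γ (b * c) x))
    (hω1 : ∀ b, ω b 1 = Equiv.refl X) (h1ω : ∀ b, ω 1 b = Equiv.refl X)
    (hfree : ∀ b : B, b ≠ 1 → μ {x | R (γ b x) x} = 0)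
    (S : X → X → Prop)
    (hS : S = Relation.EqvGen (fun x y => R x y ∨ ∃ b : B, y = γ b x)) :
    ∀ᵐ x ∂μ,
      (∀ y, S x y ↔ ∃ g : B, R (γ g x) y) ∧
      (∀ g h : B, g ≠ h → ∀ y, R (γ g x) y → ¬ R (γ h x) y) := by

  have hγ1 : ∀ x : X, γ (1:B) x = x := by
    intro x
    have h := hcoc 1 1 x
    rw [h1ω 1] at h
    simp only [Equiv.refl_apply, one_mul] at h
    exact (γ (1:B)).injective h
  have shift : ∀ (g : B) (x y : X), R (γ g x) y → ∀ h : B, R (γ (h * g) x) (γ h y) := by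
    intro g x y hxy h
    have h1 : R (γ h (γ g x)) (γ h y) := (hγR h _ _).mp hxy
    rw [hcoc h g x] at h1
    exact hR.trans (hR.symm (hω h g (γ (h * g) x))) h1
  have key : ∀ᵐ x ∂μ, ∀ b : B, b ≠ 1 → ¬ R (γ b x) x := by
    rw [MeasureTheory.ae_all_iff]
    intro b
    by_cases hb : b = 1
    · exact Filter.Eventually.of_forall (fun x h => absurd hb h)
    · have : μ {x | ¬ (b ≠ 1 → ¬ R (γ b x) x)} = 0 := by
        refine measure_mono_null (fun x hx => ?_) (hfree b hb)
        simp only [Set.mem_setOf_eq, Classical.not_imp, not_not] at hx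
        exact hx.2
      exact (MeasureTheory.ae_iff).mpr this
  have main : ∀ a b : X, Relation.EqvGen (fun x y => R x y ∨ ∃ b : B, y = γ b x) a b →
      ∃ g : B, R (γ g a) b := by
    intro a b hab
    induction hab with
      | rel a b hab =>
        rcases hab with hab | ⟨g, rfl⟩
        · exact ⟨1, by rw [hγ1]; exact hab⟩
        · exact ⟨g, hR.refl _⟩
      | refl a => exact ⟨1, by rw [hγ1]; exact hR.refl a⟩
      | symm a b _ ih =>
        obtain ⟨g, hg⟩ := ih
        refine ⟨g⁻¹, ?_⟩
        have := shift g a b hg g⁻¹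
        rw [inv_mul_cancel, hγ1] at this
        exact hR.symm this
      | trans a b c _ _ ih1 ih2 =>
        obtain ⟨g, hg⟩ := ih1
        obtain ⟨h, hh⟩ := ih2
        exact ⟨h * g, hR.trans (shift g a b hg h) hh⟩
  filter_upwards [key] with x hx
  constructor
  · intro y
    constructor
    · intro hxy
      rw [hS] at hxy
      exact main x y hxy
    · rintro ⟨g, hg⟩
      rw [hS]
      refine Relation.EqvGen.trans x (γ g x) y ?_ ?_
      · exact Relation.EqvGen.rel _ _ (Or.inr ⟨g, rfl⟩)
      · exact Relation.EqvGen.rel _ _ (Or.inl hg)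
  · intro g h hgh y hgy hhy
    have h1 : R (γ g x) (γ h x) := hR.trans hgy (hR.symm hhy)
    have h2 := shift g x (γ h x) h1 g⁻¹
    rw [inv_mul_cancel, hγ1] at h2
    rw [hcoc g⁻¹ h x] at h2
    have h3 : R x (γ (g⁻¹ * h) x) := hR.trans h2 (hω g⁻¹ h (γ (g⁻¹ * h) x))
    exact hx (g⁻¹ * h) (fun he => hgh (by rw [inv_mul_eq_one] at he; exact he)) (hR.symm h3)
end

section
/- Let z ∈ ℂ with |z| = 1 and N ≥ 1. If z^{2^N} = ∑_{n ≥ N+1} 2^{N-n} z^{2^n} (the series converging absolutely since ∑_{n≥N+1} 2^{N-n} = 1), then the equation forces |z^{2^N}| = 1 to be attained as an average: in fact z^{2^N} = z^{2^n} for all n ≥ N+1, and consequently z^{2^N} = 1. In particular, the set of solutions z ∈ 𝕋 of z^{2^N} - ∑_{n≥N+1} 2^{N-n} z^{2^n} = 0 is finite. -/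
open Complex

/-!
Against a unit vector `w`, every vector `u` of the closed unit ball has `⟪w, u⟫ ≤ 1`, with
equality only for `u = w`. Pairing `w = ∑ aᵢ uᵢ` with `w` therefore forces `uᵢ = w` wherever
`aᵢ > 0`. For `w = z^{2^N}` and `uₖ = z^{2^{N+1+k}}` this gives `w² = z^{2^{N+1}} = w`, and
`w ≠ 0`, so `w = 1`.
-/

theorem eq_of_hasSum_smul_of_norm_le_one {E ι : Type*} [NormedAddCommGroup E]
    [InnerProductSpace ℝ E] {w : E} {u : ι → E} {a : ι → ℝ} (hw : ‖w‖ = 1)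
    (hu : ∀ i, ‖u i‖ ≤ 1) (ha : ∀ i, 0 ≤ a i) (ha_sum : HasSum a 1)
    (hw_sum : HasSum (fun i => a i • u i) w) {i : ι} (hi : 0 < a i) : u i = w := by
  have hinner_le : ∀ j, inner ℝ w (u j) ≤ 1 := fun j =>
    (real_inner_le_norm _ _).trans (by rw [hw, one_mul]; exact hu j)
  have hinner_sum : HasSum (fun j => a j * inner ℝ w (u j)) 1 := by
    simpa [inner_smul_right, real_inner_self_eq_norm_sq, hw] using hw_sum.mapL (innerSL ℝ w)
  have hdefect : HasSum (fun j => a j * (1 - inner ℝ w (u j))) 0 := by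
    simpa [mul_sub] using ha_sum.sub hinner_sum
  have hdefect_zero := (hasSum_zero_iff_of_nonneg fun j =>
    mul_nonneg (ha j) (sub_nonneg.2 (hinner_le j))).1 hdefect
  have hinner_eq : inner ℝ w (u i) = 1 := by
    have := congrFun hdefect_zero i
    simp only [Pi.zero_apply, mul_eq_zero, hi.ne', false_or, sub_eq_zero] at this
    exact this.symm
  have hdist : ‖u i - w‖ ^ 2 ≤ 0 := by
    rw [norm_sub_sq_real, real_inner_comm, hinner_eq, hw]
    nlinarith [hu i, norm_nonneg (u i)]
  have hdist_zero : ‖u i - w‖ ^ 2 = 0 := le_antisymm hdist (by positivity)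
  rwa [sq_eq_zero_iff, norm_eq_zero, sub_eq_zero] at hdist_zero

theorem hasSum_two_inv_pow_succ : HasSum (fun k : ℕ => (2⁻¹ : ℝ) ^ (k + 1)) 1 := by
  convert hasSum_geometric_two' 1 using 2 with k
  rw [pow_succ', inv_pow]
  field_simp

theorem Complex.eq_of_eq_tsum_two_inv_pow_succ_mul {w : ℂ} {u : ℕ → ℂ} (hw : ‖w‖ = 1)
    (hu : ∀ k, ‖u k‖ ≤ 1) (h : w = ∑' k, (2 : ℂ)⁻¹ ^ (k + 1) * u k) (k : ℕ) : u k = w := by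
  have hcoe : ∀ k, (2 : ℂ)⁻¹ ^ (k + 1) * u k = (2⁻¹ : ℝ) ^ (k + 1) • u k := fun k => by
    simp [Complex.real_smul]
  simp only [hcoe] at h
  have hsummable : Summable fun k => (2⁻¹ : ℝ) ^ (k + 1) • u k :=
    hasSum_two_inv_pow_succ.summable.of_norm_bounded fun k => by
      rw [norm_smul, Real.norm_of_nonneg (by positivity)]
      exact mul_le_of_le_one_right (by positivity) (hu k)
  exact eq_of_hasSum_smul_of_norm_le_one hw hu (fun k => by positivity) hasSum_two_inv_pow_succ
    (h ▸ hsummable.hasSum) (by positivity)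

section PowTwoPow

variable {z : ℂ} {N : ℕ}

theorem pow_two_pow_eq_of_eq_tsum (hz : ‖z‖ = 1)
    (h : z ^ 2 ^ N = ∑' k : ℕ, (2 : ℂ)⁻¹ ^ (k + 1) * z ^ 2 ^ (N + 1 + k)) {n : ℕ}
    (hn : N + 1 ≤ n) : z ^ 2 ^ N = z ^ 2 ^ n := by
  have hnorm : ∀ m : ℕ, ‖z ^ m‖ = 1 := fun m => by rw [norm_pow, hz, one_pow]
  obtain ⟨k, rfl⟩ := Nat.exists_eq_add_of_le hn
  exact (Complex.eq_of_eq_tsum_two_inv_pow_succ_mul (hnorm _) (fun k => (hnorm _).le) h k).symm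

theorem pow_two_pow_eq_one_of_eq_tsum (hz : ‖z‖ = 1)
    (h : z ^ 2 ^ N = ∑' k : ℕ, (2 : ℂ)⁻¹ ^ (k + 1) * z ^ 2 ^ (N + 1 + k)) :
    z ^ 2 ^ N = 1 := by
  have hidem : IsIdempotentElem (z ^ 2 ^ N) := by
    rw [IsIdempotentElem, ← pow_add, ← two_mul, ← pow_succ']
    exact (pow_two_pow_eq_of_eq_tsum hz h le_rfl).symm
  have hne : z ^ 2 ^ N ≠ 0 := pow_ne_zero _ (norm_ne_zero_iff.1 (hz ▸ one_ne_zero))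
  exact (IsIdempotentElem.iff_eq_zero_or_one.1 hidem).resolve_left hne

end PowTwoPow

theorem unimodular_convex_combination_power_eq_one_general (N : ℕ) :
    (∀ z : ℂ, ‖z‖ = 1 →
      z ^ (2 ^ N) = ∑' k : ℕ, ((2 : ℂ)⁻¹) ^ (k + 1) * z ^ (2 ^ (N + 1 + k)) →
      (∀ n : ℕ, N + 1 ≤ n → z ^ (2 ^ N) = z ^ (2 ^ n)) ∧ z ^ (2 ^ N) = 1) ∧
    {z : ℂ | ‖z‖ = 1 ∧
      z ^ (2 ^ N) = ∑' k : ℕ, ((2 : ℂ)⁻¹) ^ (k + 1) * z ^ (2 ^ (N + 1 + k))}.Finite := by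
  refine ⟨fun z hz h => ⟨fun n hn => pow_two_pow_eq_of_eq_tsum hz h hn,
    pow_two_pow_eq_one_of_eq_tsum hz h⟩, ?_⟩
  refine (Polynomial.nthRootsFinset (2 ^ N) (1 : ℂ)).finite_toSet.subset ?_
  rintro z ⟨hz, h⟩
  rw [Finset.mem_coe, Polynomial.mem_nthRootsFinset (by positivity)]
  exact pow_two_pow_eq_one_of_eq_tsum hz h

/-- If `z ∈ 𝕋` satisfies `z^{2^N} = ∑_{n ≥ N+1} 2^{N-n} z^{2^n}` (a convex combination of
unimodular numbers, written with `n = N+1+k`), then `z^{2^N} = z^{2^n}` for all `n ≥ N+1`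
and `z^{2^N} = 1`; in particular the set of solutions in `𝕋` is finite. -/
theorem unimodular_convex_combination_power_eq_one (N : ℕ) (hN : 1 ≤ N) :
    (∀ z : ℂ, ‖z‖ = 1 →
      z ^ (2 ^ N) = ∑' k : ℕ, ((2 : ℂ)⁻¹) ^ (k + 1) * z ^ (2 ^ (N + 1 + k)) →
      (∀ n : ℕ, N + 1 ≤ n → z ^ (2 ^ N) = z ^ (2 ^ n)) ∧ z ^ (2 ^ N) = 1) ∧
    {z : ℂ | ‖z‖ = 1 ∧
      z ^ (2 ^ N) = ∑' k : ℕ, ((2 : ℂ)⁻¹) ^ (k + 1) * z ^ (2 ^ (N + 1 + k))}.Finite :=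
  unimodular_convex_combination_power_eq_one_general N
end
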